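/- Let M be an Ag'-module. The subspace J = {Σ_s L_s ⊗ w_s ∈ g''⊗M : Σ_s L_{s+n} w_s = 0 for all n ∈ pℤ} is an Ag'-submodule of g'' ⊗ M (with the module structure of Lemma 3.4), and it is contained in the kernel of the g'-module homomorphism π: g''⊗M → M, L_s ⊗ w ↦ L_s w. -/

import Mathlib

-- The index `s + n` inside `{s : ℤ // s ∉ pℤ}` (for `n ∈ pℤ` the sum is again not in `pℤ`).
open Classical in
noncomputable def addIdx (p : ℕ) (s : {s : ℤ // ¬ (p : ℤ) ∣ s}) (n : ℤ) :
    {s : ℤ // ¬ (p : ℤ) ∣ s} :=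
  if h : ¬ (p : ℤ) ∣ (s.1 + n) then ⟨s.1 + n, h⟩ else s

-- The action of `t^n` on `g'' ⊗ M ≅ {s // s ∉ pℤ} →₀ M`: `t^n (L_s ⊗ w) = L_{s+n} ⊗ w`.
noncomputable def tOp (p : ℕ) (M : Type) [AddCommGroup M] [Module ℂ M] (n : ℤ) :
    Module.End ℂ ({s : ℤ // ¬ (p : ℤ) ∣ s} →₀ M) :=
  Finsupp.lsum ℂ fun s => Finsupp.lsingle (addIdx p s n)

-- The action of `L_a` on `g'' ⊗ M`: `a (L_s ⊗ w) = [a, L_s] ⊗ w + L_s ⊗ (a w)`.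
open Classical in
noncomputable def lOp (p : ℕ) (M : Type) [AddCommGroup M] [Module ℂ M]
    (L : ℤ → Module.End ℂ M) (m : ℤ) :
    Module.End ℂ ({s : ℤ // ¬ (p : ℤ) ∣ s} →₀ M) :=
  Finsupp.lsum ℂ fun s =>
    (if (p : ℤ) ∣ m then (s.1 : ℂ) • Finsupp.lsingle (addIdx p s m)
      else (0 : M →ₗ[ℂ] ({s : ℤ // ¬ (p : ℤ) ∣ s} →₀ M)))
    + (Finsupp.lsingle s).comp (L m : M →ₗ[ℂ] M)

-- The map `π : g'' ⊗ M → M`, `L_s ⊗ w ↦ L_s w`.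
noncomputable def piOp (p : ℕ) (M : Type) [AddCommGroup M] [Module ℂ M]
    (L : ℤ → Module.End ℂ M) : ({s : ℤ // ¬ (p : ℤ) ∣ s} →₀ M) →ₗ[ℂ] M :=
  Finsupp.lsum ℂ fun s => (L s.1 : M →ₗ[ℂ] M)

-- `J = {Σ_s L_s ⊗ w_s : Σ_s L_{s+n} w_s = 0 for all n ∈ pℤ}`; note that
-- `Σ_s L_{s+n} w_s = π (t^n v)` for `v = Σ_s L_s ⊗ w_s`.
noncomputable def Jsub (p : ℕ) (M : Type) [AddCommGroup M] [Module ℂ M]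
    (L : ℤ → Module.End ℂ M) : Submodule ℂ ({s : ℤ // ¬ (p : ℤ) ∣ s} →₀ M) :=
  ⨅ (n : ℤ) (_ : (p : ℤ) ∣ n),
    LinearMap.ker ((piOp p M L).comp (tOp p M n : _ →ₗ[ℂ] _))


/-!
Write `π_n := π ∘ tⁿ`, so that `J = ⋂_{n ∈ pℤ} ker π_n`. On a generator `L_s ⊗ w` one has
`π_n (L_a (L_s ⊗ w)) = L_{s+n} (L_a w) + [p ∣ a] s L_{s+a+n} w`, and the bracket relations of `g'`
acting on `M` turn this into `L_a (π_n (L_s ⊗ w)) - [p ∣ a] n π_{a+n}(L_s ⊗ w)`. Hence `J` is stable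
under every `L_a`; it is stable under `tⁿ` since `π_m ∘ tⁿ = π_{n+m}`; and `J ⊆ ker π_0 = ker π`.
-/

section

variable {p : ℕ} {M : Type} [AddCommGroup M] [Module ℂ M]

lemma addIdx_of_dvd (s : {s : ℤ // ¬ (p : ℤ) ∣ s}) {n : ℤ} (hn : (p : ℤ) ∣ n) :
    addIdx p s n = ⟨s.1 + n, fun h => s.2 (by simpa using dvd_sub h hn)⟩ :=
  dif_pos _

lemma tOp_single (n : ℤ) (s : {s : ℤ // ¬ (p : ℤ) ∣ s}) (w : M) :
    tOp p M n (Finsupp.single s w) = Finsupp.single (addIdx p s n) w := by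
  simp [tOp]

lemma piOp_single (L : ℤ → Module.End ℂ M) (s : {s : ℤ // ¬ (p : ℤ) ∣ s}) (w : M) :
    piOp p M L (Finsupp.single s w) = L s.1 w := by
  simp [piOp]

lemma lOp_single_of_dvd (L : ℤ → Module.End ℂ M) {a : ℤ} (ha : (p : ℤ) ∣ a)
    (s : {s : ℤ // ¬ (p : ℤ) ∣ s}) (w : M) :
    lOp p M L a (Finsupp.single s w) =
      (s.1 : ℂ) • Finsupp.single (addIdx p s a) w + Finsupp.single s (L a w) := by
  simp [lOp, ha]

lemma lOp_single_of_not_dvd (L : ℤ → Module.End ℂ M) {a : ℤ} (ha : ¬ (p : ℤ) ∣ a)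
    (s : {s : ℤ // ¬ (p : ℤ) ∣ s}) (w : M) :
    lOp p M L a (Finsupp.single s w) = Finsupp.single s (L a w) := by
  simp [lOp, ha]

lemma tOp_zero : tOp p M 0 = LinearMap.id := by
  refine Finsupp.lhom_ext fun s w => ?_
  rw [tOp_single, addIdx_of_dvd s (dvd_zero _)]
  simp

lemma tOp_tOp {m n : ℤ} (hm : (p : ℤ) ∣ m) (hn : (p : ℤ) ∣ n)
    (v : {s : ℤ // ¬ (p : ℤ) ∣ s} →₀ M) :
    tOp p M m (tOp p M n v) = tOp p M (n + m) v := by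
  suffices (tOp p M m : _ →ₗ[ℂ] _) ∘ₗ (tOp p M n : _ →ₗ[ℂ] _) = tOp p M (n + m) from
    LinearMap.congr_fun this v
  refine Finsupp.lhom_ext fun s w => ?_
  simp only [LinearMap.comp_apply, tOp_single, addIdx_of_dvd _ hm, addIdx_of_dvd _ hn,
    addIdx_of_dvd _ (dvd_add hn hm), add_assoc]

lemma piOp_tOp_lOp_of_dvd (L : ℤ → Module.End ℂ M)
    (hrep2 : ∀ m r : ℤ, (p : ℤ) ∣ m → ¬ (p : ℤ) ∣ r →
      L m * L r - L r * L m = (r : ℂ) • L (m + r))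
    {a n : ℤ} (ha : (p : ℤ) ∣ a) (hn : (p : ℤ) ∣ n) (v : {s : ℤ // ¬ (p : ℤ) ∣ s} →₀ M) :
    piOp p M L (tOp p M n (lOp p M L a v)) =
      L a (piOp p M L (tOp p M n v)) - (n : ℂ) • piOp p M L (tOp p M (a + n) v) := by
  suffices (piOp p M L) ∘ₗ (tOp p M n : _ →ₗ[ℂ] _) ∘ₗ (lOp p M L a : _ →ₗ[ℂ] _) =
      (L a : M →ₗ[ℂ] M) ∘ₗ (piOp p M L) ∘ₗ (tOp p M n : _ →ₗ[ℂ] _)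
        - (n : ℂ) • ((piOp p M L) ∘ₗ (tOp p M (a + n) : _ →ₗ[ℂ] _)) from
    LinearMap.congr_fun this v
  refine Finsupp.lhom_ext fun s w => ?_
  have hsn : ¬ (p : ℤ) ∣ s.1 + n := fun h => s.2 (by simpa using dvd_sub h hn)
  have hcomm : L (s.1 + n) (L a w) =
      L a (L (s.1 + n) w) - ((s.1 + n : ℤ) : ℂ) • L (a + (s.1 + n)) w := by
    rw [← Module.End.mul_apply, ← Module.End.mul_apply, ← LinearMap.smul_apply,
      ← hrep2 a _ ha hsn]
    simp
  simp only [LinearMap.comp_apply, LinearMap.sub_apply, LinearMap.smul_apply,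
    lOp_single_of_dvd L ha, tOp_single, map_add, map_smul, piOp_single, addIdx_of_dvd _ ha,
    addIdx_of_dvd _ hn, addIdx_of_dvd _ (dvd_add ha hn), hcomm]
  rw [show s.1 + a + n = a + (s.1 + n) by ring, show s.1 + (a + n) = a + (s.1 + n) by ring]
  push_cast
  module

lemma piOp_tOp_lOp_of_not_dvd (L : ℤ → Module.End ℂ M)
    (hrep3 : ∀ r s : ℤ, ¬ (p : ℤ) ∣ r → ¬ (p : ℤ) ∣ s → L r * L s - L s * L r = 0)
    {a n : ℤ} (ha : ¬ (p : ℤ) ∣ a) (hn : (p : ℤ) ∣ n) (v : {s : ℤ // ¬ (p : ℤ) ∣ s} →₀ M) :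
    piOp p M L (tOp p M n (lOp p M L a v)) = L a (piOp p M L (tOp p M n v)) := by
  suffices (piOp p M L) ∘ₗ (tOp p M n : _ →ₗ[ℂ] _) ∘ₗ (lOp p M L a : _ →ₗ[ℂ] _) =
      (L a : M →ₗ[ℂ] M) ∘ₗ (piOp p M L) ∘ₗ (tOp p M n : _ →ₗ[ℂ] _) from
    LinearMap.congr_fun this v
  refine Finsupp.lhom_ext fun s w => ?_
  have hsn : ¬ (p : ℤ) ∣ s.1 + n := fun h => s.2 (by simpa using dvd_sub h hn)
  simp only [LinearMap.comp_apply, lOp_single_of_not_dvd L ha, tOp_single, piOp_single,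
    addIdx_of_dvd _ hn]
  rw [← Module.End.mul_apply, ← Module.End.mul_apply, ← sub_eq_zero, ← LinearMap.sub_apply,
    hrep3 _ _ hsn ha, LinearMap.zero_apply]

lemma mem_Jsub_iff (L : ℤ → Module.End ℂ M) (v : {s : ℤ // ¬ (p : ℤ) ∣ s} →₀ M) :
    v ∈ Jsub p M L ↔ ∀ n : ℤ, (p : ℤ) ∣ n → piOp p M L (tOp p M n v) = 0 := by
  simp [Jsub, Submodule.mem_iInf, LinearMap.mem_ker]

end

theorem stmt_10_general (p : ℕ) (M : Type) [AddCommGroup M] [Module ℂ M]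
    (L : ℤ → Module.End ℂ M)
    (hrep2 : ∀ m r : ℤ, (p : ℤ) ∣ m → ¬ (p : ℤ) ∣ r →
      L m * L r - L r * L m = (r : ℂ) • L (m + r))
    (hrep3 : ∀ r s : ℤ, ¬ (p : ℤ) ∣ r → ¬ (p : ℤ) ∣ s → L r * L s - L s * L r = 0) :
    (∀ v, v ∈ Jsub p M L ↔
      ∀ n : ℤ, (p : ℤ) ∣ n → piOp p M L (tOp p M n v) = 0) ∧
    (∀ (a : ℤ) (v), v ∈ Jsub p M L → lOp p M L a v ∈ Jsub p M L) ∧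
    (∀ n : ℤ, (p : ℤ) ∣ n → ∀ v ∈ Jsub p M L, tOp p M n v ∈ Jsub p M L) ∧
    (∀ (a : ℤ) (v), piOp p M L (lOp p M L a v) = L a (piOp p M L v)) ∧
    Jsub p M L ≤ LinearMap.ker (piOp p M L) := by
  refine ⟨mem_Jsub_iff L, fun a v hv => ?_, fun n hn v hv => ?_, fun a v => ?_, fun v hv => ?_⟩
  · rw [mem_Jsub_iff] at hv ⊢
    intro n hn
    by_cases ha : (p : ℤ) ∣ a
    · rw [piOp_tOp_lOp_of_dvd L hrep2 ha hn, hv n hn, hv (a + n) (dvd_add ha hn), map_zero,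
        smul_zero, sub_zero]
    · rw [piOp_tOp_lOp_of_not_dvd L hrep3 ha hn, hv n hn, map_zero]
  · rw [mem_Jsub_iff] at hv ⊢
    intro m hm
    rw [tOp_tOp hm hn, hv (n + m) (dvd_add hn hm)]
  · by_cases ha : (p : ℤ) ∣ a
    · simpa [tOp_zero] using piOp_tOp_lOp_of_dvd L hrep2 ha (dvd_zero _) v
    · simpa [tOp_zero] using piOp_tOp_lOp_of_not_dvd L hrep3 ha (dvd_zero _) v
  · simpa [tOp_zero] using (mem_Jsub_iff L v).1 hv 0 (dvd_zero _)

/-- Lemma 3.5: `J` is an `Ag'`-submodule of `g'' ⊗ M`, and it is contained in the kernel of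
the `g'`-module homomorphism `π : g'' ⊗ M → M`, `L_s ⊗ w ↦ L_s w`. -/
theorem stmt_10 (p : ℕ) (hp : 1 < p) (M : Type) [AddCommGroup M] [Module ℂ M]
    (L T : ℤ → Module.End ℂ M)
    (hrep1 : ∀ m n : ℤ, (p : ℤ) ∣ m → (p : ℤ) ∣ n →
      L m * L n - L n * L m = (n - m : ℂ) • L (m + n))
    (hrep2 : ∀ m r : ℤ, (p : ℤ) ∣ m → ¬ (p : ℤ) ∣ r →
      L m * L r - L r * L m = (r : ℂ) • L (m + r))
    (hrep3 : ∀ r s : ℤ, ¬ (p : ℤ) ∣ r → ¬ (p : ℤ) ∣ s → L r * L s - L s * L r = 0)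
    (hA : ∀ m n : ℤ, (p : ℤ) ∣ m → (p : ℤ) ∣ n → T m * T n = T (m + n))
    (hcomp1 : ∀ m n : ℤ, (p : ℤ) ∣ m → (p : ℤ) ∣ n →
      L m * T n - T n * L m = (n : ℂ) • T (m + n))
    (hcomp2 : ∀ n r : ℤ, (p : ℤ) ∣ n → ¬ (p : ℤ) ∣ r → T n * L r = L r * T n) :
    (∀ v, v ∈ Jsub p M L ↔
      ∀ n : ℤ, (p : ℤ) ∣ n → piOp p M L (tOp p M n v) = 0) ∧
    (∀ (a : ℤ) (v), v ∈ Jsub p M L → lOp p M L a v ∈ Jsub p M L) ∧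
    (∀ n : ℤ, (p : ℤ) ∣ n → ∀ v ∈ Jsub p M L, tOp p M n v ∈ Jsub p M L) ∧
    (∀ (a : ℤ) (v), piOp p M L (lOp p M L a v) = L a (piOp p M L v)) ∧
    Jsub p M L ≤ LinearMap.ker (piOp p M L) :=
  stmt_10_general p M L hrep2 hrep3
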